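/- Let n ≥ 1, let v_1,…,v_m ∈ Sⁿ⁻¹ be pairwise distinct with positive integer weights μ_1,…,μ_m, and let u_1,…,u_k ∈ Sⁿ⁻¹ be pairwise distinct with k = μ_1 + … + μ_m; set μ = ∑ μ_i δ_{v_i} and λ = ∑ δ_{u_j}. Assume: (i) μ and λ are weak Aleksandrov related; (ii) μ is not concentrated on a closed hemisphere; (iii) the pair (μ, λ) is edge-normal loop free. Then there exists exactly one f ∈ 𝔽 maximizing the assignment functional A over 𝔽 (i.e. there is f ∈ 𝔽 with A(g) < A(f) for every g ∈ 𝔽 with g ≠ f). -/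

import Mathlib

open MeasureTheory Set RealInnerProductSpace
open scoped ENNReal

noncomputable section

abbrev Euc (n : ℕ) := EuclideanSpace ℝ (Fin n)

/-- The unit sphere `S^{n-1}` in `ℝ^n`. -/
def uSphere (n : ℕ) : Set (Euc n) := Metric.sphere 0 1

/-- A convex body containing the origin in its interior (`K ∈ 𝒦ⁿ₀`). -/
def IsConvexBody0 {n : ℕ} (K : Set (Euc n)) : Prop :=
  IsCompact K ∧ Convex ℝ K ∧ (0 : Euc n) ∈ interior K

/-- The radial function `ρ_K(u) = sup {t > 0 : t • u ∈ K}`. -/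
def radialFn {n : ℕ} (K : Set (Euc n)) (u : Euc n) : ℝ :=
  sSup {t : ℝ | 0 < t ∧ t • u ∈ K}

/-- The normal cone of unit outer normals at `x`. -/
def normalCone {n : ℕ} (K : Set (Euc n)) (x : Euc n) : Set (Euc n) :=
  {w ∈ uSphere n | ∀ y ∈ K, ⟪y - x, w⟫ ≤ 0}

/-- The radial Gauss image `α_K(ω)`. -/
def gaussImage {n : ℕ} (K ω : Set (Euc n)) : Set (Euc n) :=
  ⋃ u ∈ ω, normalCone K (radialFn K u • u)

/-- The relation `μ = λ(K, ·)`: `λ(α_K(ω)) = μ(ω)` for every Borel `ω ⊆ S^{n-1}`,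
`λ` being applied as an outer measure. -/
def GaussRel {n : ℕ} (K : Set (Euc n)) (lam mu : Measure (Euc n)) : Prop :=
  ∀ ω : Set (Euc n), ω ⊆ uSphere n → MeasurableSet ω →
    lam (gaussImage K ω) = mu ω

/-- The cone generated by `ω`: `{t • u : t ≥ 0, u ∈ ω}`. -/
def coneOf {n : ℕ} (ω : Set (Euc n)) : Set (Euc n) :=
  {x | ∃ t : ℝ, 0 ≤ t ∧ ∃ u ∈ ω, x = t • u}

/-- `ω ⊆ S^{n-1}` is spherically convex. -/
def SphConvex {n : ℕ} (ω : Set (Euc n)) : Prop :=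
  ω ⊆ uSphere n ∧ (coneOf ω).Nonempty ∧ Convex ℝ (coneOf ω) ∧ coneOf ω ≠ univ

/-- The polar set `ω*`. -/
def polarSet {n : ℕ} (ω : Set (Euc n)) : Set (Euc n) :=
  {w ∈ uSphere n | ∀ u ∈ ω, ⟪u, w⟫ ≤ 0}

/-- The outer parallel set `ω_β`. -/
def outerPar {n : ℕ} (ω : Set (Euc n)) (β : ℝ) : Set (Euc n) :=
  {w ∈ uSphere n | ∃ u ∈ ω, Real.cos β < ⟪u, w⟫}

/-- `μ` and `λ` are weak Aleksandrov related. -/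
def WeakAleks {n : ℕ} (mu lam : Measure (Euc n)) : Prop :=
  mu (uSphere n) = lam (uSphere n) ∧
  ∀ ω : Set (Euc n), IsCompact ω → SphConvex ω →
    mu ω + lam (polarSet ω) ≤ mu (uSphere n)

/-- `log : ℝ → EReal` with `log x = -∞` for `x ≤ 0`. -/
def elog (x : ℝ) : EReal := if x ≤ 0 then ⊥ else ((Real.log x : ℝ) : EReal)

/-- Assignment functions `𝔽`: each fiber `f⁻¹(i)` has cardinality `μ_i`. -/
def IsAssign {k m : ℕ} (μw : Fin m → ℕ) (f : Fin k → Fin m) : Prop :=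
  ∀ i : Fin m, (Finset.univ.filter fun j => f j = i).card = μw i

/-- The assignment functional `A(f) = ∑_j log ⟨u_j, v_{f(j)}⟩`, valued in `EReal`. -/
def assignA {n k m : ℕ} (u : Fin k → Euc n) (v : Fin m → Euc n) (f : Fin k → Fin m) : EReal :=
  ∑ j : Fin k, elog ⟪u j, v (f j)⟫

/-- Interior of `s` relative to the unit sphere. -/
def sphInterior {n : ℕ} (s : Set (Euc n)) : Set (Euc n) :=
  {x ∈ uSphere n | ∃ ε > 0, ∀ y ∈ uSphere n, dist y x < ε → y ∈ s}

/-- `μ = ∑ μ_i δ_{v_i}` is not concentrated on a closed hemisphere. -/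
def NotHemisphere {n m : ℕ} (v : Fin m → Euc n) : Prop :=
  ¬ ∃ w ∈ uSphere n, ∀ i : Fin m, ⟪w, v i⟫ ≤ 0

/-- The discrete measure `∑ μ_i δ_{v_i}` with natural number weights. -/
def discMeasN {n m : ℕ} (μw : Fin m → ℕ) (v : Fin m → Euc n) : Measure (Euc n) :=
  ∑ i : Fin m, (μw i : ℝ≥0∞) • Measure.dirac (v i)

/-- The discrete measure `∑ μ_i δ_{v_i}` with positive real weights. -/
def discMeasR {n m : ℕ} (μw : Fin m → ℝ) (v : Fin m → Euc n) : Measure (Euc n) :=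
  ∑ i : Fin m, ENNReal.ofReal (μw i) • Measure.dirac (v i)

/-- The support function `h_K`. -/
def suppFn {n : ℕ} (K : Set (Euc n)) (w : Euc n) : ℝ :=
  sSup ((fun x => ⟪x, w⟫) '' K)

/-- The pair of discrete measures determined by `u`, `v` is edge-normal loop free. -/
def EdgeNormalLoopFree {n k m : ℕ} (u : Fin k → Euc n) (v : Fin m → Euc n) : Prop :=
  ∀ l : ℕ, 2 ≤ l → ∀ a : Fin l → Fin k, Function.Injective a →
    ∀ b : Fin l → Fin m, Function.Injective b →
      ¬ ∃ t : Fin l → ℝ, (∀ s, 0 < t s) ∧ ∀ s : Fin l,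
        ⟪u (a s), t s • v (b s) - t (finRotate l s) • v (b (finRotate l s))⟫ = 0


section Part1
variable {n m k : ℕ}

lemma discMeasN_apply (μw : Fin m → ℕ) (v : Fin m → Euc n) (s : Set (Euc n)) :
    discMeasN μw v s = ∑ i, (μw i : ℝ≥0∞) * s.indicator 1 (v i) := by
  simp [discMeasN, Measure.dirac_apply]

lemma mem_uSphere_iff {x : Euc n} : x ∈ uSphere n ↔ ‖x‖ = 1 := by
  simp [uSphere]

lemma hall_aux (v : Fin m → Euc n) (u : Fin k → Euc n)
    (hv : ∀ i, v i ∈ uSphere n) (hu : ∀ j, u j ∈ uSphere n)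
    (μw : Fin m → ℕ) (hk : k = ∑ i, μw i)
    (hWA : WeakAleks (discMeasN μw v) (discMeasN (fun _ : Fin k => 1) u))
    (S : Finset (Fin m)) :
    (∑ i ∈ S, μw i) + (Finset.univ.filter
      (fun j => ∀ i ∈ S, ⟪u j, v i⟫ ≤ 0)).card ≤ k := by
  classical
  rcases S.eq_empty_or_nonempty with rfl | ⟨i0, hi0⟩
  · simpa using Finset.card_filter_le Finset.univ _
  -- the polar cone P of the set {v i : i ∈ S}
  set P : Set (Euc n) := {w | ∀ i ∈ S, ⟪v i, w⟫ ≤ 0} with hP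
  by_cases hPz : ∀ w ∈ P, w = (0 : Euc n)
  · -- every u j is adjacent; the filter is empty
    have : (Finset.univ.filter (fun j => ∀ i ∈ S, ⟪u j, v i⟫ ≤ 0)) = ∅ := by
      rw [Finset.filter_eq_empty_iff]
      intro j _ hj
      have huP : u j ∈ P := by
        intro i hi
        rw [real_inner_comm]; exact hj i hi
      have := hPz _ huP
      have h1 : ‖u j‖ = 1 := mem_uSphere_iff.1 (hu j)
      rw [this] at h1; simp at h1
    rw [this]
    simp only [Finset.card_empty, add_zero, hk]
    exact Finset.sum_le_sum_of_subset (Finset.subset_univ S)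
  · push_neg at hPz
    obtain ⟨w0, hw0P, hw0⟩ := hPz
    -- ω := P° ∩ sphere
    set C : Set (Euc n) := {x | ∀ w ∈ P, ⟪x, w⟫ ≤ 0} with hC
    set ω : Set (Euc n) := uSphere n ∩ C with hω
    have hsmul : ∀ (c : ℝ), 0 ≤ c → ∀ x ∈ C, c • x ∈ C := by
      intro c hc x hx w hw
      rw [real_inner_smul_left]
      exact mul_nonpos_of_nonneg_of_nonpos hc (hx w hw)
    have hvC : ∀ i ∈ S, v i ∈ ω := by
      intro i hi
      exact ⟨hv i, fun w hw => hw i hi⟩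
    have hcone : coneOf ω = C := by
      ext x
      constructor
      · rintro ⟨t, ht, y, ⟨-, hyC⟩, rfl⟩
        exact hsmul t ht y hyC
      · intro hx
        by_cases hx0 : x = 0
        · exact ⟨0, le_rfl, v i0, hvC i0 hi0, by simp [hx0]⟩
        · refine ⟨‖x‖, norm_nonneg x, ‖x‖⁻¹ • x, ⟨?_, ?_⟩, ?_⟩
          · rw [mem_uSphere_iff, norm_smul, norm_inv, norm_norm,
              inv_mul_cancel₀ (norm_ne_zero_iff.2 hx0)]
          · exact hsmul _ (by positivity) x hx
          · rw [smul_smul, mul_inv_cancel₀ (norm_ne_zero_iff.2 hx0), one_smul]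
    have hCclosed : IsClosed C := by
      have : C = ⋂ w ∈ P, {x : Euc n | ⟪x, w⟫ ≤ 0} := by
        ext x; simp [hC, mem_iInter]
      rw [this]
      refine isClosed_biInter fun w _ => ?_
      exact isClosed_le (Continuous.inner continuous_id continuous_const) continuous_const
    have hωcompact : IsCompact ω := by
      refine (isCompact_sphere (0 : Euc n) 1).of_isClosed_subset
        (IsClosed.inter Metric.isClosed_sphere hCclosed) inter_subset_left
    have hsph : SphConvex ω := by
      refine ⟨inter_subset_left, ⟨0, 0, le_rfl, v i0, hvC i0 hi0, by simp⟩, ?_, ?_⟩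
      · rw [hcone]
        intro x hx y hy a b ha hb hab w hw
        have := hx w hw; have := hy w hw
        rw [inner_add_left, real_inner_smul_left, real_inner_smul_left]
        nlinarith [hx w hw, hy w hw]
      · rw [hcone]
        intro hCuniv
        have : w0 ∈ C := hCuniv ▸ mem_univ w0
        have := this w0 hw0P
        rw [real_inner_self_eq_norm_sq] at this
        have := norm_pos_iff.mpr hw0
        nlinarith
    have hkey := hWA.2 ω hωcompact hsph
    -- compute the three measures
    have hμS : discMeasN μw v (uSphere n) = (k : ℝ≥0∞) := by
      rw [discMeasN_apply]
      have : ∀ i, (uSphere n).indicator (1 : Euc n → ℝ≥0∞) (v i) = 1 := by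
        intro i; rw [indicator_of_mem (hv i)]; rfl
      simp only [this, mul_one, hk]
      push_cast; rfl
    have hμω : (∑ i ∈ S, (μw i : ℝ≥0∞)) ≤ discMeasN μw v ω := by
      rw [discMeasN_apply]
      have h1 : ∀ i ∈ S, (μw i : ℝ≥0∞) = (μw i : ℝ≥0∞) * ω.indicator 1 (v i) := by
        intro i hi
        rw [indicator_of_mem (hvC i hi)]
        simp
      rw [Finset.sum_congr rfl h1]
      exact Finset.sum_le_sum_of_subset (Finset.subset_univ S)
    have hlamw : ((Finset.univ.filter
        (fun j => ∀ i ∈ S, ⟪u j, v i⟫ ≤ 0)).card : ℝ≥0∞) ≤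
        discMeasN (fun _ : Fin k => 1) u (polarSet ω) := by
      rw [discMeasN_apply]
      have hmem : ∀ j ∈ Finset.univ.filter (fun j => ∀ i ∈ S, ⟪u j, v i⟫ ≤ 0),
          u j ∈ polarSet ω := by
        intro j hj
        rw [Finset.mem_filter] at hj
        refine ⟨hu j, fun x hx => ?_⟩
        have huP : u j ∈ P := fun i hi => by
          rw [real_inner_comm]; exact hj.2 i hi
        exact hx.2 (u j) huP
      calc ((Finset.univ.filter (fun j => ∀ i ∈ S, ⟪u j, v i⟫ ≤ 0)).card : ℝ≥0∞)
          = ∑ j ∈ Finset.univ.filter (fun j => ∀ i ∈ S, ⟪u j, v i⟫ ≤ 0),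
            ((1:ℕ) : ℝ≥0∞) * (polarSet ω).indicator 1 (u j) := by
            rw [Finset.card_eq_sum_ones, Nat.cast_sum]
            refine Finset.sum_congr rfl fun j hj => ?_
            rw [indicator_of_mem (hmem j hj)]
            simp
        _ ≤ ∑ j : Fin k, ((1:ℕ) : ℝ≥0∞) * (polarSet ω).indicator 1 (u j) :=
            Finset.sum_le_sum_of_subset (Finset.subset_univ _)
    have hfinal : ((∑ i ∈ S, μw i : ℕ) : ℝ≥0∞) + ((Finset.univ.filter
        (fun j => ∀ i ∈ S, ⟪u j, v i⟫ ≤ 0)).card : ℝ≥0∞) ≤ (k : ℝ≥0∞) := by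
      rw [← hμS]
      push_cast
      exact le_trans (add_le_add hμω hlamw) hkey
    exact_mod_cast hfinal

lemma exists_pos_assign (v : Fin m → Euc n) (u : Fin k → Euc n)
    (hv : ∀ i, v i ∈ uSphere n) (hu : ∀ j, u j ∈ uSphere n)
    (μw : Fin m → ℕ) (hk : k = ∑ i, μw i)
    (hWA : WeakAleks (discMeasN μw v) (discMeasN (fun _ : Fin k => 1) u)) :
    ∃ f : Fin k → Fin m, IsAssign μw f ∧ ∀ j, 0 < ⟪u j, v (f j)⟫ := by
  classical
  set t : Fin k → Finset (Σ i : Fin m, Fin (μw i)) :=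
    fun j => Finset.univ.filter (fun p => 0 < ⟪u j, v p.1⟫) with ht
  have hhall : ∀ A : Finset (Fin k), A.card ≤ (A.biUnion t).card := by
    intro A
    set T : Finset (Fin m) := Finset.univ.filter (fun i => ∃ j ∈ A, 0 < ⟪u j, v i⟫) with hT
    have hbU : A.biUnion t = T.sigma (fun _ => Finset.univ) := by
      ext p
      simp only [Finset.mem_biUnion, ht, Finset.mem_filter, Finset.mem_univ, true_and,
        Finset.mem_sigma, hT, and_true]
    rw [hbU, Finset.card_sigma]
    simp only [Finset.card_univ, Fintype.card_fin]
    have haux := hall_aux v u hv hu μw hk hWA Tᶜ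
    have hAsub : A ⊆ Finset.univ.filter (fun j => ∀ i ∈ Tᶜ, ⟪u j, v i⟫ ≤ 0) := by
      intro j hj
      rw [Finset.mem_filter]
      refine ⟨Finset.mem_univ _, fun i hi => ?_⟩
      rw [Finset.mem_compl, hT, Finset.mem_filter] at hi
      push_neg at hi
      exact hi (Finset.mem_univ _) j hj
    have hAcard : A.card ≤ (Finset.univ.filter
        (fun j => ∀ i ∈ Tᶜ, ⟪u j, v i⟫ ≤ 0)).card := Finset.card_le_card hAsub
    have hsplit : (∑ i ∈ T, μw i) + (∑ i ∈ Tᶜ, μw i) = k := by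
      rw [Finset.sum_add_sum_compl, hk]
    omega
  obtain ⟨F, hFinj, hFmem⟩ :=
    (Finset.all_card_le_biUnion_card_iff_exists_injective t).1 hhall
  have hcard : Fintype.card (Fin k) = Fintype.card (Σ i : Fin m, Fin (μw i)) := by
    simp [Fintype.card_sigma, hk]
  have hFbij : Function.Bijective F :=
    (Fintype.bijective_iff_injective_and_card F).2 ⟨hFinj, hcard⟩
  refine ⟨fun j => (F j).1, ?_, ?_⟩
  · intro i
    have h1 : (Finset.univ.filter (fun j => (F j).1 = i)).card =
        (Finset.univ.filter (fun p : Σ i : Fin m, Fin (μw i) => p.1 = i)).card := by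
      refine Finset.card_bij (fun j _ => F j) ?_ ?_ ?_
      · intro j hj
        rw [Finset.mem_filter] at hj ⊢
        exact ⟨Finset.mem_univ _, hj.2⟩
      · intro j1 h1 j2 h2 he
        exact hFinj he
      · intro p hp
        obtain ⟨j, rfl⟩ := hFbij.2 p
        rw [Finset.mem_filter] at hp
        exact ⟨j, Finset.mem_filter.2 ⟨Finset.mem_univ _, hp.2⟩, rfl⟩
    rw [h1]
    have h2 : (Finset.univ.filter (fun p : Σ i : Fin m, Fin (μw i) => p.1 = i)) =
        ({i} : Finset (Fin m)).sigma (fun _ => Finset.univ) := by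
      ext p
      simp [Finset.mem_sigma]
    rw [h2, Finset.card_sigma]
    simp
  · intro j
    have := hFmem j
    rw [ht, Finset.mem_filter] at this
    exact this.2

end Part1

lemma exists_perm {k m : ℕ} (f g : Fin k → Fin m)
    (hfib : ∀ i, (Finset.univ.filter fun j => f j = i).card =
      (Finset.univ.filter fun j => g j = i).card) :
    ∃ σ : Equiv.Perm (Fin k), (∀ j, f j = g (σ j)) ∧ (∀ j, f j = g j → σ j = j) := by
  classical
  set Af : Fin m → Finset (Fin k) :=
    fun i => Finset.univ.filter (fun j => f j = i ∧ ¬ f j = g j) with hAf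
  set Ag : Fin m → Finset (Fin k) :=
    fun i => Finset.univ.filter (fun j => g j = i ∧ ¬ f j = g j) with hAg
  have hcard : ∀ i, (Af i).card = (Ag i).card := by
    intro i
    have hEq : Finset.univ.filter (fun j => f j = i ∧ f j = g j) =
        Finset.univ.filter (fun j => g j = i ∧ f j = g j) := by
      ext j
      simp only [Finset.mem_filter, Finset.mem_univ, true_and]
      constructor
      · rintro ⟨h1, h2⟩; exact ⟨h2 ▸ h1, h2⟩
      · rintro ⟨h1, h2⟩; exact ⟨h2.symm ▸ h1, h2⟩
    have h1 : (Af i).card + (Finset.univ.filter (fun j => f j = i ∧ f j = g j)).card =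
        (Finset.univ.filter fun j => f j = i).card := by
      have h1' := Finset.card_filter_add_card_filter_not
        (s := Finset.univ.filter (fun j => f j = i)) (p := fun j => ¬ f j = g j)

      simp only [Finset.filter_filter, not_not] at h1'
      simp only [hAf]
      exact h1'
    have h2 : (Ag i).card + (Finset.univ.filter (fun j => g j = i ∧ f j = g j)).card =
        (Finset.univ.filter fun j => g j = i).card := by
      have h2' := Finset.card_filter_add_card_filter_not
        (s := Finset.univ.filter (fun j => g j = i)) (p := fun j => ¬ f j = g j)

      simp only [Finset.filter_filter, not_not] at h2'
      simp only [hAg]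
      exact h2'
    rw [hEq] at h1
    have := hfib i
    omega
  set e : ∀ i : Fin m, {x // x ∈ Af i} ≃ {x // x ∈ Ag i} :=
    fun i => Finset.equivOfCardEq (hcard i) with he
  set E : Fin m → Fin k → Fin k :=
    fun i j => if h : j ∈ Af i then (e i ⟨j, h⟩ : Fin k) else j with hE
  have hEmem : ∀ i j (h : j ∈ Af i), E i j ∈ Ag i := by
    intro i j h
    have : E i j = (e i ⟨j, h⟩ : Fin k) := by rw [hE]; exact dif_pos h
    rw [this]
    exact (e i ⟨j, h⟩).2
  have hEinj : ∀ i j1 j2, j1 ∈ Af i → j2 ∈ Af i → E i j1 = E i j2 → j1 = j2 := by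
    intro i j1 j2 h1 h2 heq
    rw [hE] at heq
    simp only [dif_pos h1, dif_pos h2] at heq
    have := (e i).injective (Subtype.ext heq)
    exact congrArg Subtype.val this
  set σf : Fin k → Fin k := fun j => E (f j) j with hσf
  have hmemAf : ∀ j, ¬ f j = g j → j ∈ Af (f j) := by
    intro j h
    rw [hAf, Finset.mem_filter]
    exact ⟨Finset.mem_univ _, rfl, h⟩
  have hfix : ∀ j, f j = g j → σf j = j := by
    intro j h
    rw [hσf, hE]
    simp only
    rw [dif_neg]
    rw [hAf, Finset.mem_filter]
    push_neg
    intro _ _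
    exact h
  have hmove : ∀ j, ¬ f j = g j → σf j ∈ Ag (f j) := fun j h => hEmem _ _ (hmemAf j h)
  have hmoveD : ∀ j, ¬ f j = g j → (g (σf j) = f j ∧ ¬ f (σf j) = g (σf j)) := by
    intro j h
    have := hmove j h
    rw [hAg, Finset.mem_filter] at this
    exact this.2
  have hinj : Function.Injective σf := by
    intro j1 j2 heq
    by_cases h1 : f j1 = g j1 <;> by_cases h2 : f j2 = g j2
    · rw [hfix j1 h1, hfix j2 h2] at heq; exact heq
    · exfalso
      rw [hfix j1 h1] at heq
      have := (hmoveD j2 h2).2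
      rw [← heq] at this
      exact this h1
    · exfalso
      rw [hfix j2 h2] at heq
      have := (hmoveD j1 h1).2
      rw [heq] at this
      exact this h2
    · have hi : f j1 = f j2 := by
        rw [← (hmoveD j1 h1).1, ← (hmoveD j2 h2).1, heq]
      rw [hσf] at heq
      simp only at heq
      rw [← hi] at heq
      exact hEinj (f j1) j1 j2 (hmemAf j1 h1) (hi ▸ hmemAf j2 h2) heq
  refine ⟨Equiv.ofBijective σf (Finite.injective_iff_bijective.1 hinj), ?_, ?_⟩
  · intro j
    by_cases h : f j = g j
    · rw [Equiv.ofBijective_apply, hfix j h]; exact h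
    · rw [Equiv.ofBijective_apply]
      exact ((hmoveD j h).1).symm
  · intro j h
    rw [Equiv.ofBijective_apply]
    exact hfix j h

lemma exists_cycle {k m : ℕ} (f g : Fin k → Fin m)
    (hfib : ∀ i, (Finset.univ.filter fun j => f j = i).card =
      (Finset.univ.filter fun j => g j = i).card)
    (j0 : Fin k) (hj0 : ¬ f j0 = g j0) :
    ∃ (l : ℕ), 2 ≤ l ∧ ∃ (a : Fin l → Fin k) (b : Fin l → Fin m),
      Function.Injective a ∧ Function.Injective b ∧
      (∀ r, f (a r) = b r) ∧ (∀ r, g (a r) = b (finRotate l r)) := by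
  classical
  obtain ⟨σ, hσ1, hσ2⟩ := exists_perm f g hfib
  set a0 : ℕ → Fin k := fun s => (fun x => σ.symm x)^[s] j0 with ha0
  have ha0succ : ∀ s, a0 (s + 1) = σ.symm (a0 s) := by
    intro s
    rw [ha0]
    simp only
    rw [Function.iterate_succ_apply']
  have ha0D : ∀ s, ¬ f (a0 s) = g (a0 s) := by
    intro s
    induction s with
    | zero => exact hj0
    | succ s ih =>
      intro hcon
      rw [ha0succ s] at hcon
      have hfix := hσ2 _ hcon
      rw [Equiv.apply_symm_apply] at hfix
      rw [← hfix] at hcon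
      exact ih hcon
  set b0 : ℕ → Fin m := fun s => f (a0 s) with hb0
  have hchain : ∀ s, g (a0 s) = b0 (s + 1) := by
    intro s
    show g (a0 s) = f (a0 (s + 1))
    rw [ha0succ s, hσ1 (σ.symm (a0 s)), Equiv.apply_symm_apply]
  have hcons : ∀ s, ¬ b0 (s + 1) = b0 s := by
    intro s hcon
    apply ha0D s
    show b0 s = g (a0 s)
    rw [hchain s]
    exact hcon.symm
  have hrep : ∃ d, 0 < d ∧ ∃ s, b0 (s + d) = b0 s := by
    have hcard : (Finset.univ : Finset (Fin m)).card < (Finset.range (m + 1)).card := by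
      simp
    obtain ⟨x, hx, y, hy, hxy, hbxy⟩ :=
      Finset.exists_ne_map_eq_of_card_lt_of_maps_to hcard
        (fun s _ => Finset.mem_univ (b0 s))
    rcases Nat.lt_or_ge x y with h | h
    · exact ⟨y - x, by omega, x, by rw [Nat.add_sub_cancel' (le_of_lt h)]; exact hbxy.symm⟩
    · have hyx : y < x := by omega
      exact ⟨x - y, by omega, y, by rw [Nat.add_sub_cancel' (le_of_lt hyx)]; exact hbxy⟩
  set l := Nat.find hrep with hldef
  obtain ⟨hlpos, s0, hs0⟩ : 0 < l ∧ ∃ s, b0 (s + l) = b0 s := Nat.find_spec hrep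
  have hmin : ∀ d, 0 < d → d < l → ∀ s, ¬ b0 (s + d) = b0 s := by
    intro d hd hdl s hcon
    exact Nat.find_min hrep hdl ⟨hd, s, hcon⟩
  have hl2 : 2 ≤ l := by
    by_contra hcc
    push_neg at hcc
    have hone : l = 1 := by omega
    rw [hone] at hs0
    exact hcons s0 hs0
  clear_value l
  refine ⟨l, hl2, fun r => a0 (s0 + r.val), fun r => b0 (s0 + r.val), ?_, ?_, ?_, ?_⟩
  · intro r1 r2 heq
    have heq' : a0 (s0 + r1.val) = a0 (s0 + r2.val) := heq
    have hb : b0 (s0 + r1.val) = b0 (s0 + r2.val) := congrArg f heq'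
    by_contra hne
    rcases Nat.lt_or_ge r1.val r2.val with h | h
    · exact hmin (r2.val - r1.val) (by omega) (by omega) (s0 + r1.val)
        (by rw [show s0 + r1.val + (r2.val - r1.val) = s0 + r2.val by omega]; exact hb.symm)
    · have h' : r2.val < r1.val := by
        rcases Nat.lt_or_ge r2.val r1.val with h2 | h2
        · exact h2
        · exact absurd (Fin.ext (show r1.val = r2.val by omega)) hne
      exact hmin (r1.val - r2.val) (by omega) (by omega) (s0 + r2.val)
        (by rw [show s0 + r2.val + (r1.val - r2.val) = s0 + r1.val by omega]; exact hb)
  · intro r1 r2 heq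
    have heq' : b0 (s0 + r1.val) = b0 (s0 + r2.val) := heq
    by_contra hne
    rcases Nat.lt_or_ge r1.val r2.val with h | h
    · exact hmin (r2.val - r1.val) (by omega) (by omega) (s0 + r1.val)
        (by rw [show s0 + r1.val + (r2.val - r1.val) = s0 + r2.val by omega]; exact heq'.symm)
    · have h' : r2.val < r1.val := by
        rcases Nat.lt_or_ge r2.val r1.val with h2 | h2
        · exact h2
        · exact absurd (Fin.ext (show r1.val = r2.val by omega)) hne
      exact hmin (r1.val - r2.val) (by omega) (by omega) (s0 + r2.val)
        (by rw [show s0 + r2.val + (r1.val - r2.val) = s0 + r1.val by omega]; exact heq')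
  · intro r; rfl
  · intro r
    show g (a0 (s0 + r.val)) = b0 (s0 + (finRotate l r).val)
    rw [hchain (s0 + r.val)]
    obtain ⟨l', rfl⟩ : ∃ l', l = l' + 1 := ⟨l - 1, by omega⟩
    rw [finRotate_succ_apply, Fin.val_add_one]
    by_cases hr : r = Fin.last l'
    · rw [if_pos hr, add_zero]
      have hv : r.val = l' := by rw [hr]; exact Fin.val_last l'
      rw [show s0 + r.val + 1 = s0 + (l' + 1) by omega]
      exact hs0
    · rw [if_neg hr, ← add_assoc]


lemma isAssign_swap {k m l : ℕ} (μw : Fin m → ℕ) (f c : Fin k → Fin m)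
    (hf : IsAssign μw f) (a : Fin l → Fin k) (ha : Function.Injective a)
    (hcount : ∀ i, (Finset.univ.filter fun r => c (a r) = i).card =
      (Finset.univ.filter fun r => f (a r) = i).card) :
    IsAssign μw (fun j => if ∃ r, a r = j then c j else f j) := by
  classical
  intro i
  set h : Fin k → Fin m := fun j => if ∃ r, a r = j then c j else f j with hh
  set R : Finset (Fin k) := Finset.univ.image a with hR
  have hmemR : ∀ j, j ∈ R ↔ ∃ r, a r = j := by
    intro j
    rw [hR]
    simp [Finset.mem_image]
  have hsplit : ∀ F : Fin k → Fin m, (Finset.univ.filter fun j => F j = i).card =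
      (Finset.univ.filter fun j => F j = i ∧ j ∈ R).card +
      (Finset.univ.filter fun j => F j = i ∧ j ∉ R).card := by
    intro F
    have := Finset.card_filter_add_card_filter_not
      (s := Finset.univ.filter (fun j => F j = i)) (p := fun j => j ∈ R)
    simp only [Finset.filter_filter] at this
    omega
  have e1 : Finset.univ.filter (fun j => h j = i ∧ j ∈ R) =
      Finset.univ.filter (fun j => c j = i ∧ j ∈ R) := by
    ext j
    simp only [Finset.mem_filter, Finset.mem_univ, true_and]
    constructor
    · rintro ⟨h1, h2⟩
      rw [hh] at h1
      simp only at h1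
      rw [if_pos ((hmemR j).1 h2)] at h1
      exact ⟨h1, h2⟩
    · rintro ⟨h1, h2⟩
      refine ⟨?_, h2⟩
      rw [hh]
      simp only
      rw [if_pos ((hmemR j).1 h2)]
      exact h1
  have e2 : Finset.univ.filter (fun j => h j = i ∧ j ∉ R) =
      Finset.univ.filter (fun j => f j = i ∧ j ∉ R) := by
    ext j
    simp only [Finset.mem_filter, Finset.mem_univ, true_and]
    have hnot : (¬ ∃ r, a r = j) ↔ j ∉ R := not_congr (hmemR j).symm
    constructor
    · rintro ⟨h1, h2⟩
      rw [hh] at h1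
      simp only at h1
      rw [if_neg (hnot.2 h2)] at h1
      exact ⟨h1, h2⟩
    · rintro ⟨h1, h2⟩
      refine ⟨?_, h2⟩
      rw [hh]
      simp only
      rw [if_neg (hnot.2 h2)]
      exact h1
  have e3 : ∀ F : Fin k → Fin m, (Finset.univ.filter (fun j => F j = i ∧ j ∈ R)).card =
      (Finset.univ.filter (fun r : Fin l => F (a r) = i)).card := by
    intro F
    refine (Finset.card_bij (fun r _ => a r) ?_ ?_ ?_).symm
    · intro r hr
      rw [Finset.mem_filter] at hr ⊢
      exact ⟨Finset.mem_univ _, hr.2, (hmemR (a r)).2 ⟨r, rfl⟩⟩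
    · intro r1 _ r2 _ heq
      exact ha heq
    · intro j hj
      rw [Finset.mem_filter] at hj
      obtain ⟨r, rfl⟩ := (hmemR j).1 hj.2.2
      exact ⟨r, Finset.mem_filter.2 ⟨Finset.mem_univ _, hj.2.1⟩, rfl⟩
  rw [hsplit h, e1, e2, e3 c, hcount i, ← e3 f, ← hsplit f]
  exact hf i

lemma sum_shift_card {l m : ℕ} (b : Fin l → Fin m) (i : Fin m) :
    (Finset.univ.filter fun r => b (finRotate l r) = i).card =
    (Finset.univ.filter fun r => b r = i).card := by
  classical
  refine Finset.card_bij (fun r _ => finRotate l r) ?_ ?_ ?_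
  · intro r hr
    rw [Finset.mem_filter] at hr ⊢
    exact ⟨Finset.mem_univ _, hr.2⟩
  · intro r1 _ r2 _ heq
    exact (finRotate l).injective heq
  · intro r hr
    rw [Finset.mem_filter] at hr
    refine ⟨(finRotate l).symm r, Finset.mem_filter.2 ⟨Finset.mem_univ _, ?_⟩, (finRotate l).apply_symm_apply r⟩
    rw [Equiv.apply_symm_apply]
    exact hr.2

lemma sum_diff {k l : ℕ} (φ ψ : Fin k → ℝ) (a : Fin l → Fin k) (ha : Function.Injective a)
    (h : ∀ j, (¬ ∃ r, a r = j) → φ j = ψ j) :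
    ∑ j, φ j = ∑ j, ψ j - ∑ r, ψ (a r) + ∑ r, φ (a r) := by
  classical
  set R : Finset (Fin k) := Finset.univ.image a with hR
  have h1 : ∀ (χ : Fin k → ℝ), ∑ r, χ (a r) = ∑ j ∈ R, χ j := by
    intro χ
    rw [hR, Finset.sum_image (fun x _ y _ hxy => ha hxy)]
  have h2 : ∀ (χ : Fin k → ℝ), ∑ j, χ j = ∑ j ∈ R, χ j + ∑ j ∈ Rᶜ, χ j := by
    intro χ
    rw [Finset.sum_add_sum_compl]
  have h3 : ∑ j ∈ Rᶜ, φ j = ∑ j ∈ Rᶜ, ψ j := by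
    refine Finset.sum_congr rfl fun j hj => ?_
    apply h
    rw [Finset.mem_compl, hR] at hj
    intro ⟨r, hr⟩
    exact hj (Finset.mem_image.2 ⟨r, Finset.mem_univ _, hr⟩)
  rw [h1 φ, h1 ψ, h2 φ, h2 ψ, h3]
  ring

lemma loop_t {l : ℕ} (p q : Fin l → ℝ) (hp : ∀ r, 0 < p r) (hq : ∀ r, 0 < q r)
    (hprod : ∏ r, p r = ∏ r, q r) :
    ∃ t : Fin l → ℝ, (∀ r, 0 < t r) ∧ ∀ r, t (finRotate l r) * q r = t r * p r := by
  classical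
  set pp : ℕ → ℝ := fun x => if h : x < l then p ⟨x, h⟩ / q ⟨x, h⟩ else 1 with hpp
  have hpppos : ∀ x, 0 < pp x := by
    intro x
    rw [hpp]
    by_cases h : x < l
    · simp only [dif_pos h]
      exact div_pos (hp _) (hq _)
    · simp only [dif_neg h]
      norm_num
  have hppval : ∀ (r : Fin l), pp r.val = p r / q r := by
    intro r
    rw [hpp]
    simp only [dif_pos r.isLt]
  refine ⟨fun r => ∏ x ∈ Finset.range r.val, pp x, ?_, ?_⟩
  · intro r
    exact Finset.prod_pos fun x _ => hpppos x
  · intro r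
    rcases Nat.eq_zero_or_pos l with rfl | hlpos
    · exact absurd r.isLt (by omega)
    obtain ⟨l', rfl⟩ : ∃ l', l = l' + 1 := ⟨l - 1, by omega⟩
    have hqne : ∀ r', q r' ≠ 0 := fun r' => ne_of_gt (hq r')
    by_cases hr : r = Fin.last l'
    · -- wrap-around case
      subst hr
      have hrot : finRotate (l' + 1) (Fin.last l') = 0 := by
        rw [finRotate_succ_apply, Fin.last_add_one]
      rw [hrot]
      simp only [Fin.val_zero, Finset.range_zero, Finset.prod_empty, one_mul]
      have hall : ∏ x ∈ Finset.range (l' + 1), pp x = ∏ r' : Fin (l' + 1), (p r' / q r') := by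
        rw [← Fin.prod_univ_eq_prod_range]
        exact Finset.prod_congr rfl fun r' _ => by rw [hppval]
      have hone : ∏ r' : Fin (l' + 1), (p r' / q r') = 1 := by
        rw [Finset.prod_div_distrib, hprod, div_self]
        exact Finset.prod_ne_zero_iff.2 fun r' _ => hqne r'
      have hsucc : ∏ x ∈ Finset.range (l' + 1), pp x =
          (∏ x ∈ Finset.range l', pp x) * pp l' := Finset.prod_range_succ pp l'
      have hlast : pp l' = p (Fin.last l') / q (Fin.last l') := hppval (Fin.last l')
      have h1 : (∏ x ∈ Finset.range l', pp x) * (p (Fin.last l') / q (Fin.last l')) = 1 := by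
        rw [← hlast, ← hsucc, hall, hone]
      have hpne := ne_of_gt (hp (Fin.last l'))
      show q (Fin.last l') = (∏ x ∈ Finset.range (Fin.last l').val, pp x) * p (Fin.last l')
      rw [Fin.val_last]
      field_simp at h1
      rw [div_eq_one_iff_eq (hqne (Fin.last l'))] at h1
      exact h1.symm
    · -- ordinary case
      have hval : (finRotate (l' + 1) r).val = r.val + 1 := by
        rw [finRotate_succ_apply, Fin.val_add_one, if_neg hr]
      have ht : ∏ x ∈ Finset.range (finRotate (l' + 1) r).val, pp x =
          (∏ x ∈ Finset.range r.val, pp x) * (p r / q r) := by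
        rw [hval, Finset.prod_range_succ, hppval]
      show (∏ x ∈ Finset.range ((finRotate (l' + 1)) r).val, pp x) * q r =
        (∏ x ∈ Finset.range r.val, pp x) * p r
      rw [ht]
      field_simp
      rw [mul_div_assoc, div_self (hqne r), mul_one]

section MainAux
variable {n k m : ℕ}

lemma ereal_coe_sum {ι : Type*} (s : Finset ι) (c : ι → ℝ) :
    ∑ j ∈ s, ((c j : ℝ) : EReal) = ((∑ j ∈ s, c j : ℝ) : EReal) := by
  classical
  induction s using Finset.induction with
  | empty => simp
  | insert _ _ h ih => rw [Finset.sum_insert h, Finset.sum_insert h, ih, EReal.coe_add]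

lemma assignA_coe (u : Fin k → Euc n) (v : Fin m → Euc n) (f : Fin k → Fin m)
    (hpos : ∀ j, 0 < ⟪u j, v (f j)⟫) :
    assignA u v f = ((∑ j, Real.log ⟪u j, v (f j)⟫ : ℝ) : EReal) := by
  rw [assignA, ← ereal_coe_sum]
  exact Finset.sum_congr rfl fun j _ => by
    rw [elog, if_neg (not_le.2 (hpos j))]

lemma assignA_bot (u : Fin k → Euc n) (v : Fin m → Euc n) (f : Fin k → Fin m)
    (j : Fin k) (h : ⟪u j, v (f j)⟫ ≤ 0) : assignA u v f = ⊥ := by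
  rw [assignA, ← Finset.add_sum_erase _ _ (Finset.mem_univ j)]
  have : elog ⟪u j, v (f j)⟫ = ⊥ := by rw [elog, if_pos h]
  rw [this, EReal.bot_add]

end MainAux

/-- Weak Aleksandrov related, edge-normal loop free measures (with `μ` not
concentrated on a closed hemisphere) admit a unique maximizer of the assignment functional. -/
theorem stmt17 (n m k : ℕ) (hn : 1 ≤ n)
    (v : Fin m → Euc n) (u : Fin k → Euc n)
    (hv : ∀ i, v i ∈ uSphere n) (hu : ∀ j, u j ∈ uSphere n)
    (hvinj : Function.Injective v) (huinj : Function.Injective u)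
    (μw : Fin m → ℕ) (hμw : ∀ i, 0 < μw i) (hk : k = ∑ i, μw i)
    (hWA : WeakAleks (discMeasN μw v) (discMeasN (fun _ : Fin k => 1) u))
    (hNH : NotHemisphere v)
    (hloop : EdgeNormalLoopFree u v) :
    ∃ f : Fin k → Fin m, IsAssign μw f ∧
      ∀ g : Fin k → Fin m, IsAssign μw g → g ≠ f →
        assignA u v g < assignA u v f := by
  classical
  obtain ⟨f0, hf0A, hf0pos⟩ := exists_pos_assign v u hv hu μw hk hWA
  obtain ⟨f, hfF, hfmax⟩ := Finset.exists_max_image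
    (Finset.univ.filter (fun f : Fin k → Fin m => IsAssign μw f)) (assignA u v)
    ⟨f0, Finset.mem_filter.2 ⟨Finset.mem_univ _, hf0A⟩⟩
  have hfA : IsAssign μw f := (Finset.mem_filter.1 hfF).2
  refine ⟨f, hfA, ?_⟩
  intro g hgA hgne
  by_contra hnlt
  have hgle : assignA u v g ≤ assignA u v f :=
    hfmax g (Finset.mem_filter.2 ⟨Finset.mem_univ _, hgA⟩)
  have hgeq : assignA u v g = assignA u v f := le_antisymm hgle (not_lt.1 hnlt)
  have hf0le : assignA u v f0 ≤ assignA u v f :=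
    hfmax f0 (Finset.mem_filter.2 ⟨Finset.mem_univ _, hf0A⟩)
  have hf0coe := assignA_coe u v f0 hf0pos
  have hfbot : assignA u v f ≠ ⊥ := by
    intro hb
    rw [hb, hf0coe] at hf0le
    exact (EReal.coe_ne_bot _) (le_bot_iff.1 hf0le)
  have hgbot : assignA u v g ≠ ⊥ := by rw [hgeq]; exact hfbot
  have hfpos : ∀ j, 0 < ⟪u j, v (f j)⟫ := by
    intro j
    by_contra hc
    push_neg at hc
    exact hfbot (assignA_bot u v f j hc)
  have hgpos : ∀ j, 0 < ⟪u j, v (g j)⟫ := by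
    intro j
    by_contra hc
    push_neg at hc
    exact hgbot (assignA_bot u v g j hc)
  have hfib : ∀ i, (Finset.univ.filter fun j => f j = i).card =
      (Finset.univ.filter fun j => g j = i).card := fun i => by rw [hfA i, hgA i]
  obtain ⟨j0, hj0⟩ := Function.ne_iff.1 hgne
  obtain ⟨l, hl2, a, b, ainj, binj, hfa, hga⟩ :=
    exists_cycle f g hfib j0 (fun h => hj0 h.symm)
  set h1 : Fin k → Fin m := fun j => if ∃ r, a r = j then g j else f j with hh1
  set h2 : Fin k → Fin m := fun j => if ∃ r, a r = j then f j else g j with hh2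
  have hcount1 : ∀ i, (Finset.univ.filter fun r => g (a r) = i).card =
      (Finset.univ.filter fun r => f (a r) = i).card := by
    intro i
    have e1 : (Finset.univ.filter fun r => g (a r) = i) =
        (Finset.univ.filter fun r => b (finRotate l r) = i) :=
      Finset.filter_congr fun r _ => by rw [hga r]
    have e2 : (Finset.univ.filter fun r => f (a r) = i) =
        (Finset.univ.filter fun r => b r = i) :=
      Finset.filter_congr fun r _ => by rw [hfa r]
    rw [e1, e2, sum_shift_card]
  have hA1 : IsAssign μw h1 := isAssign_swap μw f g hfA a ainj hcount1
  have hA2 : IsAssign μw h2 := isAssign_swap μw g f hgA a ainj (fun i => (hcount1 i).symm)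
  have hh1a : ∀ r, h1 (a r) = g (a r) := fun r => by
    rw [hh1]; simp only; rw [if_pos ⟨r, rfl⟩]
  have hh2a : ∀ r, h2 (a r) = f (a r) := fun r => by
    rw [hh2]; simp only; rw [if_pos ⟨r, rfl⟩]
  have h1pos : ∀ j, 0 < ⟪u j, v (h1 j)⟫ := by
    intro j
    rw [hh1]; simp only
    split_ifs with h
    exacts [hgpos j, hfpos j]
  have h2pos : ∀ j, 0 < ⟪u j, v (h2 j)⟫ := by
    intro j
    rw [hh2]; simp only
    split_ifs with h
    exacts [hfpos j, hgpos j]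
  have hfcoe := assignA_coe u v f hfpos
  have hgcoe := assignA_coe u v g hgpos
  have h1coe := assignA_coe u v h1 h1pos
  have h2coe := assignA_coe u v h2 h2pos
  have h1le : assignA u v h1 ≤ assignA u v f :=
    hfmax h1 (Finset.mem_filter.2 ⟨Finset.mem_univ _, hA1⟩)
  have h2le : assignA u v h2 ≤ assignA u v f :=
    hfmax h2 (Finset.mem_filter.2 ⟨Finset.mem_univ _, hA2⟩)
  rw [h1coe, hfcoe, EReal.coe_le_coe_iff] at h1le
  rw [h2coe, hfcoe, EReal.coe_le_coe_iff] at h2le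
  rw [hgcoe, hfcoe] at hgeq
  have hSg : (∑ j, Real.log ⟪u j, v (g j)⟫) = ∑ j, Real.log ⟪u j, v (f j)⟫ :=
    EReal.coe_eq_coe_iff.1 hgeq
  have key1 : ∑ j, Real.log ⟪u j, v (h1 j)⟫ = (∑ j, Real.log ⟪u j, v (f j)⟫)
      - (∑ r, Real.log ⟪u (a r), v (f (a r))⟫) + ∑ r, Real.log ⟪u (a r), v (h1 (a r))⟫ :=
    sum_diff _ _ a ainj (fun j hj => by rw [hh1]; simp only; rw [if_neg hj])
  have key2 : ∑ j, Real.log ⟪u j, v (h2 j)⟫ = (∑ j, Real.log ⟪u j, v (g j)⟫)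
      - (∑ r, Real.log ⟪u (a r), v (g (a r))⟫) + ∑ r, Real.log ⟪u (a r), v (h2 (a r))⟫ :=
    sum_diff _ _ a ainj (fun j hj => by rw [hh2]; simp only; rw [if_neg hj])
  have hs1 : (∑ r, Real.log ⟪u (a r), v (h1 (a r))⟫) =
      ∑ r, Real.log ⟪u (a r), v (g (a r))⟫ :=
    Finset.sum_congr rfl fun r _ => by rw [hh1a r]
  have hs2 : (∑ r, Real.log ⟪u (a r), v (h2 (a r))⟫) =
      ∑ r, Real.log ⟪u (a r), v (f (a r))⟫ :=
    Finset.sum_congr rfl fun r _ => by rw [hh2a r]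
  rw [hs1] at key1
  rw [hs2] at key2
  have hPgPf : (∑ r, Real.log ⟪u (a r), v (g (a r))⟫) ≤
      ∑ r, Real.log ⟪u (a r), v (f (a r))⟫ := by
    rw [key1] at h1le; linarith
  have hPfPg : (∑ r, Real.log ⟪u (a r), v (f (a r))⟫) ≤
      ∑ r, Real.log ⟪u (a r), v (g (a r))⟫ := by
    rw [key2, hSg] at h2le; linarith
  have hPP : (∑ r, Real.log ⟪u (a r), v (f (a r))⟫) =
      ∑ r, Real.log ⟪u (a r), v (g (a r))⟫ := le_antisymm hPfPg hPgPf
  set p : Fin l → ℝ := fun r => ⟪u (a r), v (b r)⟫ with hp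
  set q : Fin l → ℝ := fun r => ⟪u (a r), v (b (finRotate l r))⟫ with hq
  have hppos : ∀ r, 0 < p r := fun r => by
    rw [hp]; simp only; rw [← hfa r]; exact hfpos (a r)
  have hqpos : ∀ r, 0 < q r := fun r => by
    rw [hq]; simp only; rw [← hga r]; exact hgpos (a r)
  have hexp : ∀ (c : Fin l → ℝ), (∀ r, 0 < c r) →
      ∏ r, c r = Real.exp (∑ r, Real.log (c r)) := by
    intro c hc
    rw [Real.exp_sum]
    exact Finset.prod_congr rfl fun r _ => (Real.exp_log (hc r)).symm
  have hprod : ∏ r, p r = ∏ r, q r := by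
    rw [hexp p hppos, hexp q hqpos]
    congr 1
    have e1 : (∑ r, Real.log (p r)) = ∑ r, Real.log ⟪u (a r), v (f (a r))⟫ :=
      Finset.sum_congr rfl fun r _ => by rw [hp]; simp only; rw [← hfa r]
    have e2 : (∑ r, Real.log (q r)) = ∑ r, Real.log ⟪u (a r), v (g (a r))⟫ :=
      Finset.sum_congr rfl fun r _ => by rw [hq]; simp only; rw [← hga r]
    rw [e1, e2, hPP]
  obtain ⟨t, htpos, hteq⟩ := loop_t p q hppos hqpos hprod
  refine hloop l hl2 a ainj b binj ⟨t, htpos, ?_⟩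
  intro s
  rw [inner_sub_right, real_inner_smul_right, real_inner_smul_right]
  have h := hteq s
  show t s * p s - t (finRotate l s) * q s = 0
  linarith
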